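/- If f : S → T is a pseudo-isometry with constants K, C, then the natural map F : X → X̂_f to the surgered space is a pseudo-isometry; explicitly, d_{X̂_f}(F(x),F(y)) ≤ d_X(x,y) and (1/K²)d_X(x,y) − 7C/K ≤ d_{X̂_f}(F(x),F(y)) for all x, y ∈ X, and F is coarsely surjective with constant C. -/

import Mathlib

/-- `f` is a pseudo-isometry with constants `K`, `C`. -/
def IsPseudoIsometry {S T : Type*} [MetricSpace S] [MetricSpace T] (f : S → T) (K C : ℝ) : Prop :=
  (∀ x₀ x₁ : S, (1 / K) * dist x₀ x₁ - C ≤ dist (f x₀) (f x₁) ∧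
      dist (f x₀) (f x₁) ≤ K * dist x₀ x₁) ∧
  ∀ y : T, ∃ x : S, dist (f x) y ≤ C

/-- An admissible sequence from `x` to `y`: data `(x₀,y₁),(u₁,v₁),(x₁,y₂),…,(u_k,v_k),(x_k,y_{k+1})`
with `x₀ = x`, `y_{k+1} = y`, `xᵢ, yᵢ ∈ S` for `1 ≤ i ≤ k`, and `uᵢ = f(yᵢ)`, `vᵢ = f(xᵢ)`
(so the `T`-points are determined and not stored). We record `xᵢ` as `xs i` and `yᵢ` as `ys i`. -/
structure AdmSeq {X T : Type*} [MetricSpace X] [MetricSpace T] (S : Set X) (f : S → T)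
    (x y : X) where
  k : ℕ
  xs : ℕ → X
  ys : ℕ → X
  hx0 : xs 0 = x
  hyend : ys (k + 1) = y
  hxS : ∀ i, 1 ≤ i → i ≤ k → xs i ∈ S
  hyS : ∀ i, 1 ≤ i → i ≤ k → ys i ∈ S

/-- The length of an admissible sequence:
`ℓ(γ) = d_X(x₀,y₁) + Σ_{i=1}^k (d_T(uᵢ,vᵢ) + d_X(xᵢ,y_{i+1}))`. -/
noncomputable def AdmSeq.length {X T : Type*} [MetricSpace X] [MetricSpace T] {S : Set X}
    {f : S → T} {x y : X} (γ : AdmSeq S f x y) : ℝ :=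
  dist (γ.xs 0) (γ.ys 1) +
    ∑ i : Fin γ.k,
      (dist (f ⟨γ.ys (i.val + 1), γ.hyS _ (Nat.succ_le_succ (Nat.zero_le _)) i.isLt⟩)
          (f ⟨γ.xs (i.val + 1), γ.hxS _ (Nat.succ_le_succ (Nat.zero_le _)) i.isLt⟩) +
        dist (γ.xs (i.val + 1)) (γ.ys (i.val + 2)))

/-- The pseudo-metric `p(x,y)`: the infimum of lengths of admissible sequences from `x` to `y`. -/
noncomputable def surgP {X T : Type*} [MetricSpace X] [MetricSpace T] (S : Set X) (f : S → T)
    (x y : X) : ℝ :=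
  sInf {l : ℝ | ∃ γ : AdmSeq S f x y, l = γ.length}

/-- The pseudo-distance from `x ∈ X` to `t ∈ T` in the glued space: the infimum of lengths of
admissible sequences from `x` whose final pair `(x_k, y_{k+1})` is omitted, so the final
`T`-point `v_k = t` is free. -/
noncomputable def surgPXT {X T : Type*} [MetricSpace X] [MetricSpace T] (S : Set X)
    (f : S → T) (x : X) (t : T) : ℝ :=
  sInf {l : ℝ | ∃ (s : S) (γ : AdmSeq S f x s), l = γ.length + dist (f s) t}

/-- The pseudo-distance between `t, t′ ∈ T` in the glued space: either directly `d_T(t,t′)`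
(the admissible sequence consisting of the single pair `(t, t′)` with both end pairs omitted)
or via an admissible sequence through `X` with free endpoints `u₁ = t`, `v_k = t′`. -/
noncomputable def surgPTT {X T : Type*} [MetricSpace X] [MetricSpace T] (S : Set X)
    (f : S → T) (t t' : T) : ℝ :=
  min (dist t t')
    (sInf {l : ℝ | ∃ (s s' : S) (γ : AdmSeq S f (s : X) (s' : X)),
      l = dist t (f s) + γ.length + dist (f s') t'})

/-- The pseudo-metric on `X ⊔ T` given by the infimum of lengths of admissible sequences;
the surgered space `X̂_f` is its metric quotient, so distances in `X̂_f` between images of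
points of `X ⊔ T` are computed by `surgD`. -/
noncomputable def surgD {X T : Type*} [MetricSpace X] [MetricSpace T] (S : Set X)
    (f : S → T) : X ⊕ T → X ⊕ T → ℝ
  | .inl x, .inl y => surgP S f x y
  | .inl x, .inr t => surgPXT S f x t
  | .inr t, .inl y => surgPXT S f y t
  | .inr t, .inr t' => surgPTT S f t t'

/-
Feeding an admissible sequence `x = x₀, y₁, …, x_k, y_{k+1} = y` through `T` never saves much:
the `T`-legs together with the images under `f` of the intermediate `X`-legs (each stretched by at
most `K`) form a chain in `T` from `f y₁` to `f x_k`, so `d_T(f y₁, f x_k)` is at most `K` times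
the length; pulling back through the lower pseudo-isometry bound gives
`d_X(y₁, x_k) ≤ K · (K ℓ + C)`, and hence `d_X(x, y) ≤ K² ℓ + K C` for every admissible
sequence of length `ℓ`. The trivial sequence gives the upper bound, and every point of `T` is
within `C` of some `f s`, which is reached from `s ∈ X` at no cost.
-/

open Finset

lemma dist_le_sum_dist_alternating {T : Type*} [PseudoMetricSpace T] (u v : ℕ → T) (n : ℕ) :
    dist (u 0) (v n) ≤
      ∑ i ∈ range (n + 1), dist (u i) (v i) + ∑ i ∈ range n, dist (v i) (u (i + 1)) := by
  have hsteps : ∑ i ∈ range n, dist (u i) (u (i + 1)) ≤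
      ∑ i ∈ range n, (dist (u i) (v i) + dist (v i) (u (i + 1))) :=
    sum_le_sum fun i _ => dist_triangle _ _ _
  calc dist (u 0) (v n) ≤ dist (u 0) (u n) + dist (u n) (v n) := dist_triangle _ _ _
    _ ≤ _ := by
      rw [sum_add_distrib] at hsteps
      rw [sum_range_succ]
      linarith [dist_le_range_sum_dist u n]

lemma IsPseudoIsometry.dist_le {S T : Type*} [MetricSpace S] [MetricSpace T] {f : S → T}
    {K C : ℝ} (hf : IsPseudoIsometry f K C) (hK : 0 < K) (a b : S) :
    dist a b ≤ K * (dist (f a) (f b) + C) := by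
  have h := (hf.1 a b).1
  rw [one_div, inv_mul_eq_div, sub_le_iff_le_add, div_le_iff₀ hK] at h
  linarith

lemma dist_le_sq_mul_add_of_chain {X T : Type*} [PseudoMetricSpace X] [PseudoMetricSpace T]
    {K C : ℝ} (hK : 1 ≤ K) (xs ys : ℕ → X) (g : X → T) {n : ℕ}
    (hspan : dist (ys 1) (xs (n + 1)) ≤ K * (dist (g (ys 1)) (g (xs (n + 1))) + C))
    (hleg : ∀ i < n, dist (g (xs (i + 1))) (g (ys (i + 1 + 1))) ≤
      K * dist (xs (i + 1)) (ys (i + 2))) :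
    dist (xs 0) (ys (n + 2)) ≤
      K ^ 2 * (dist (xs 0) (ys 1) + ∑ i ∈ range (n + 1),
        (dist (g (ys (i + 1))) (g (xs (i + 1))) + dist (xs (i + 1)) (ys (i + 2)))) + K * C := by
  set SA := ∑ i ∈ range (n + 1), dist (g (ys (i + 1))) (g (xs (i + 1)))
  set sb := ∑ i ∈ range n, dist (xs (i + 1)) (ys (i + 2))
  have hchain : dist (g (ys 1)) (g (xs (n + 1))) ≤ SA + K * sb := by
    rw [mul_sum]
    exact (dist_le_sum_dist_alternating (fun i => g (ys (i + 1))) (fun i => g (xs (i + 1))) n).trans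
      (by gcongr with i hi; exact hleg i (mem_range.1 hi))
  have hK₀ : 0 ≤ K := by linarith
  have hSA : 0 ≤ SA := sum_nonneg fun _ _ => dist_nonneg
  have hsb : 0 ≤ sb := sum_nonneg fun _ _ => dist_nonneg
  have hfirst := dist_nonneg (x := xs 0) (y := ys 1)
  have hlast := dist_nonneg (x := xs (n + 1)) (y := ys (n + 2))
  calc dist (xs 0) (ys (n + 2))
      ≤ dist (xs 0) (ys 1) + dist (ys 1) (xs (n + 1)) + dist (xs (n + 1)) (ys (n + 2)) :=
        dist_triangle4 _ _ _ _
    _ ≤ K ^ 2 * (dist (xs 0) (ys 1) + SA + sb + dist (xs (n + 1)) (ys (n + 2))) + K * C := by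
        nlinarith [mul_le_mul_of_nonneg_left hchain hK₀, mul_nonneg hK₀ hsb,
          mul_nonneg (by nlinarith : 0 ≤ K ^ 2 - K) hSA,
          mul_nonneg (by nlinarith : 0 ≤ K ^ 2 - 1) hfirst,
          mul_nonneg (by nlinarith : 0 ≤ K ^ 2 - 1) hlast]
    _ = _ := by rw [sum_add_distrib, sum_range_succ (fun i => dist (xs (i + 1)) (ys (i + 2)))]; ring

namespace AdmSeq

variable {X T : Type*} [MetricSpace X] [MetricSpace T] {S : Set X} {f : S → T}

def direct (S : Set X) (f : S → T) (x y : X) : AdmSeq S f x y where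
  k := 0
  xs := fun _ => x
  ys := fun _ => y
  hx0 := rfl
  hyend := rfl
  hxS := fun _ h1 h2 => absurd (h1.trans h2) (by omega)
  hyS := fun _ h1 h2 => absurd (h1.trans h2) (by omega)

@[simp]
lemma length_direct (x y : X) : (direct S f x y).length = dist x y := by
  simpa [length, direct] using sum_eq_zero fun i _ => Fin.elim0 i

lemma length_nonneg {x y : X} (γ : AdmSeq S f x y) : 0 ≤ γ.length := by
  unfold length
  positivity

lemma length_eq_sum_range {x y : X} (γ : AdmSeq S f x y) (g : X → T)
    (hg : ∀ a (ha : a ∈ S), g a = f ⟨a, ha⟩) :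
    γ.length = dist x (γ.ys 1) + ∑ i ∈ range γ.k,
      (dist (g (γ.ys (i + 1))) (g (γ.xs (i + 1))) + dist (γ.xs (i + 1)) (γ.ys (i + 2))) := by
  rw [length, γ.hx0, ← Fin.sum_univ_eq_sum_range]
  congr 1
  refine sum_congr rfl fun i _ => ?_
  have hi : 1 ≤ i.val + 1 := Nat.le_add_left 1 i
  rw [hg _ (γ.hyS _ hi i.isLt), hg _ (γ.hxS _ hi i.isLt)]

lemma dist_le_length {K C : ℝ} (hK : 1 ≤ K) (hC : 0 ≤ C) (hf : IsPseudoIsometry f K C)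
    {x y : X} (γ : AdmSeq S f x y) : dist x y ≤ K ^ 2 * γ.length + K * C := by
  obtain ⟨k, xs, ys, rfl, rfl, hxS, hyS⟩ := γ
  cases k with
  | zero =>
    have hlen : (⟨0, xs, ys, rfl, rfl, hxS, hyS⟩ : AdmSeq S f (xs 0) (ys 1)).length =
        dist (xs 0) (ys 1) := by simp [length]
    rw [hlen]
    show dist (xs 0) (ys 1) ≤ _
    nlinarith [mul_nonneg (by nlinarith : 0 ≤ K ^ 2 - 1) (dist_nonneg (x := xs 0) (y := ys 1)),
      mul_nonneg (by linarith : 0 ≤ K) hC]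
  | succ n =>
    have hy₁ : ys 1 ∈ S := hyS 1 le_rfl (by omega)
    have hxₖ : xs (n + 1) ∈ S := hxS (n + 1) (by omega) le_rfl
    set g := Function.extend Subtype.val f fun _ => f ⟨ys 1, hy₁⟩
    have hg (a : X) (ha : a ∈ S) : g a = f ⟨a, ha⟩ :=
      Subtype.val_injective.extend_apply f _ ⟨a, ha⟩
    rw [length_eq_sum_range _ g hg]
    refine dist_le_sq_mul_add_of_chain hK xs ys g ?_ fun i hi => ?_
    · rw [hg _ hy₁, hg _ hxₖ]
      exact hf.dist_le (by linarith) ⟨_, hy₁⟩ ⟨_, hxₖ⟩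
    · rw [hg _ (hxS _ (by omega) (by omega)), hg _ (hyS _ (by omega) (by omega))]
      exact (hf.1 _ _).2

end AdmSeq

section Surgery

variable {X T : Type*} [MetricSpace X] [MetricSpace T] {S : Set X} {f : S → T}

lemma bddBelow_lengths (x y : X) : BddBelow {l : ℝ | ∃ γ : AdmSeq S f x y, l = γ.length} :=
  ⟨0, fun _ ⟨γ, hl⟩ => hl ▸ γ.length_nonneg⟩

lemma surgP_le_dist (x y : X) : surgP S f x y ≤ dist x y :=
  csInf_le (bddBelow_lengths x y) ⟨AdmSeq.direct S f x y, (AdmSeq.length_direct x y).symm⟩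

lemma div_sq_sub_le_surgP {K C : ℝ} (hK : 1 ≤ K) (hC : 0 ≤ C) (hf : IsPseudoIsometry f K C)
    (x y : X) : (dist x y - K * C) / K ^ 2 ≤ surgP S f x y := by
  refine le_csInf ⟨_, AdmSeq.direct S f x y, rfl⟩ ?_
  rintro _ ⟨γ, rfl⟩
  rw [div_le_iff₀ (by positivity), sub_le_iff_le_add, mul_comm]
  exact γ.dist_le_length hK hC hf

lemma surgPXT_le_dist (s : S) (t : T) : surgPXT S f s t ≤ dist (f s) t := by
  have hbdd : BddBelow {l : ℝ | ∃ (s' : S) (γ : AdmSeq S f s s'), l = γ.length + dist (f s') t} :=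
    ⟨0, fun _ ⟨_, γ, hl⟩ => hl ▸ add_nonneg γ.length_nonneg dist_nonneg⟩
  have h := csInf_le hbdd ⟨s, AdmSeq.direct S f s s, rfl⟩
  rwa [AdmSeq.length_direct, dist_self, zero_add] at h

end Surgery

/-- Main theorem: if f : S → T is a pseudo-isometry with constants K, C then the natural map
F : X → X̂_f is a pseudo-isometry: d(F(x),F(y)) ≤ d_X(x,y) and
(1/K²)d_X(x,y) − 7C/K ≤ d(F(x),F(y)) for all x, y ∈ X, and F is coarsely surjective with
constant C. (Distances in X̂_f between images of points of X ⊔ T are given by surgD.) -/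
theorem surgery_pseudoIsometry {X T : Type*} [MetricSpace X] [MetricSpace T] (S : Set X)
    (f : S → T) (K C : ℝ) (hK : 1 ≤ K) (hC : 0 ≤ C) (hf : IsPseudoIsometry f K C) :
    (∀ x y : X, surgD S f (Sum.inl x) (Sum.inl y) ≤ dist x y ∧
      (1 / K ^ 2) * dist x y - 7 * C / K ≤ surgD S f (Sum.inl x) (Sum.inl y)) ∧
    (∀ a : X ⊕ T, ∃ x : X, surgD S f (Sum.inl x) a ≤ C) := by
  have hK₀ : 0 < K := by linarith
  refine ⟨fun x y => ⟨surgP_le_dist x y, ?_⟩, ?_⟩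
  · calc (1 / K ^ 2) * dist x y - 7 * C / K
        ≤ (dist x y - K * C) / K ^ 2 := by
          have hC' : C / K ≤ 7 * C / K := by gcongr; linarith
          rw [sub_div, one_div_mul_eq_div, pow_two, mul_div_mul_left _ _ hK₀.ne']
          linarith
      _ ≤ surgP S f x y := div_sq_sub_le_surgP hK hC hf x y
  · rintro (y | t)
    · exact ⟨y, (surgP_le_dist y y).trans (by simpa using hC)⟩
    · obtain ⟨s, hs⟩ := hf.2 t
      exact ⟨s, (surgPXT_le_dist s t).trans hs⟩
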